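/- arXiv:1605.08160 — 2 statements merged into one kernel-verified Lean document; each statement's English description precedes it below -/
import Mathlib

section
/- Let f be a holomorphic function on the unit disk with sup_{z∈𝔻}|f(z)| ≤ 1, and fix 0 < δ < 1/5. If a point z in the unit disk satisfies |f(z)| ≤ δ⁴ and (1−|z|²)|f'(z)| ≥ δ, then |f(w)| ≥ δ⁴ for every w in the unit disk with ρ(z,w) = δ². -/
/-!
Compose `f` with the disk automorphism `ξ ↦ (ξ + z) / (1 + z̄ ξ)`, which sends `0` to `z` and the
point `ζ = (w - z) / (1 - z̄ w)`, of modulus `ρ(z, w)`, to `w`. The composite `g` is bounded by `1`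
on the disk, so by Cauchy's estimates its Taylor coefficients are bounded by `1`, and
`g(ζ) = f(z) + (1 - |z|²) f'(z) ζ + R` with `|R| ≤ |ζ|² / (1 - |ζ|)`.
For `|ζ| = δ²` the linear term has modulus at least `δ³`, while `|f(z)|` and `|R|` are `O(δ⁴)`;
since `δ < 1/5`, this leaves `|f(w)| ≥ δ⁴`.
-/

open Complex Metric Set Filter

noncomputable section

/-- The open unit disk in `ℂ`. -/
def unitDisk : Set ℂ := {z : ℂ | ‖z‖ < 1}

/-- A real-valued function is harmonic on a set `Ω ⊆ ℂ` if, near every point of `Ω`,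
it is the real part of a holomorphic function. -/
def HarmonicOnSet (u : ℂ → ℝ) (Ω : Set ℂ) : Prop :=
  ∀ z ∈ Ω, ∃ r > 0, Metric.ball z r ⊆ Ω ∧
    ∃ F : ℂ → ℂ, DifferentiableOn ℂ F (Metric.ball z r) ∧
      ∀ w ∈ Metric.ball z r, u w = (F w).re

/-- A positive harmonic function on the unit disk. -/
def PosHarmonic (H : ℂ → ℝ) : Prop :=
  HarmonicOnSet H unitDisk ∧ ∀ z ∈ unitDisk, 0 < H z

/-- The pseudohyperbolic distance `ρ(z,w) = |z - w| / |1 - z̄ w|`. -/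
def pd (z w : ℂ) : ℝ := ‖z - w‖ / ‖1 - (starRingEnd ℂ) z * w‖

/-- The open pseudohyperbolic disk `D(a,r)`. -/
def pBall (a : ℂ) (r : ℝ) : Set ℂ := {w ∈ unitDisk | pd a w < r}

/-- The closed pseudohyperbolic disk. -/
def pClosedBall (a : ℂ) (r : ℝ) : Set ℂ := {w ∈ unitDisk | pd a w ≤ r}

/-- An individual Blaschke factor with zero `a`. -/
def blaschkeFactor (a z : ℂ) : ℂ :=
  if a = 0 then z
  else ((starRingEnd ℂ) a / (‖a‖ : ℂ)) * ((a - z) / (1 - (starRingEnd ℂ) a * z))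

/-- The Blaschke product with zero sequence `Λ`. -/
def blaschkeProduct (Λ : ℕ → ℂ) (z : ℂ) : ℂ := ∏' n, blaschkeFactor (Λ n) z

/-- A Blaschke sequence: a sequence in the unit disk satisfying the Blaschke condition. -/
def BlaschkeSeq (Λ : ℕ → ℂ) : Prop :=
  (∀ n, Λ n ∈ unitDisk) ∧ Summable fun n => 1 - ‖Λ n‖

/-- The Nevanlinna class: holomorphic functions on the disk such that `log⁺ |f|`
has a positive harmonic majorant. -/
def Nev (f : ℂ → ℂ) : Prop :=
  DifferentiableOn ℂ f unitDisk ∧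
  ∃ H : ℂ → ℝ, PosHarmonic H ∧ ∀ z ∈ unitDisk, Real.log (‖f z‖) ≤ H z

/-- `Λ` is an interpolating sequence for the Nevanlinna class. -/
def NevInterpolating (Λ : ℕ → ℂ) : Prop :=
  Function.Injective Λ ∧ (∀ n, Λ n ∈ unitDisk) ∧
  ∃ H : ℂ → ℝ, PosHarmonic H ∧
    ∀ n, Real.exp (-H (Λ n)) ≤ ∏' k : {k : ℕ // k ≠ n}, pd (Λ k.1) (Λ n)

/-- A Nevanlinna interpolating Blaschke product. -/
def NevInterpBlaschke (B : ℂ → ℂ) : Prop :=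
  ∃ Λ : ℕ → ℂ, NevInterpolating Λ ∧ B = blaschkeProduct Λ

/-- The ideal generated by `f 0, …, f (m-1)` in the Nevanlinna class
(membership being recorded through the values on the unit disk). -/
def idealI (m : ℕ) (f : Fin m → ℂ → ℂ) : Set (ℂ → ℂ) :=
  {g | ∃ h : Fin m → ℂ → ℂ, (∀ i, Nev (h i)) ∧
        ∀ z ∈ unitDisk, g z = ∑ i, f i z * h i z}

/-- The set `J(f 0, …, f (m-1))`. -/
def idealJ (m : ℕ) (f : Fin m → ℂ → ℂ) : Set (ℂ → ℂ) :=
  {g | Nev g ∧ ∃ H : ℂ → ℝ, PosHarmonic H ∧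
        ∀ z ∈ unitDisk,
          ‖g z‖ ≤ Real.exp (H z) * ∑ i, ‖f i z‖}

/-- The ideal generated by a pair `f₁, f₂` in the Nevanlinna class. -/
def idealI2 (f₁ f₂ : ℂ → ℂ) : Set (ℂ → ℂ) :=
  {g | ∃ h₁ h₂ : ℂ → ℂ, Nev h₁ ∧ Nev h₂ ∧
        ∀ z ∈ unitDisk, g z = f₁ z * h₁ z + f₂ z * h₂ z}

/-- The set `J(f₁, f₂)`. -/
def idealJ2 (f₁ f₂ : ℂ → ℂ) : Set (ℂ → ℂ) :=
  {g | Nev g ∧ ∃ H : ℂ → ℝ, PosHarmonic H ∧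
        ∀ z ∈ unitDisk,
          ‖g z‖ ≤ Real.exp (H z) * (‖f₁ z‖ + ‖f₂ z‖)}

/-- Harmonic measure, at `z`, of the outer boundary `∂𝔻` in a subdomain `Ω` of the unit
disk, described à la Perron: the supremum of the values `u z` of harmonic functions
`0 ≤ u ≤ 1` on `Ω` whose boundary limits superior vanish at all boundary points of `Ω`
lying inside the unit disk. -/
def hmOuter (Ω : Set ℂ) (z : ℂ) : ℝ :=
  sSup {t : ℝ | ∃ u : ℂ → ℝ, HarmonicOnSet u Ω ∧
    (∀ w ∈ Ω, 0 ≤ u w ∧ u w ≤ 1) ∧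
    (∀ ζ ∈ frontier Ω, ‖ζ‖ < 1 →
      ∀ ε > 0, ∀ᶠ w in nhdsWithin ζ Ω, u w ≤ ε) ∧
    t = u z}

/-- The domain `Ω_n^H`: the unit disk minus the (closed) pseudohyperbolic disks
`𝒟_k^H = D(λ_k, e^{-H(λ_k)})` over the `k ≠ n` with `ρ(λ_k, λ_n) ≤ 1/2`. -/
def omegaDom (Λ : ℕ → ℂ) (H : ℂ → ℝ) (n : ℕ) : Set ℂ :=
  unitDisk \ ⋃ k ∈ {k : ℕ | k ≠ n ∧ pd (Λ k) (Λ n) ≤ 1/2},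
    pClosedBall (Λ k) (Real.exp (-H (Λ k)))

/-- A function invertible in the Nevanlinna class. -/
def NevInvertible (g : ℂ → ℂ) : Prop :=
  Nev g ∧ ∃ h : ℂ → ℂ, Nev h ∧ ∀ z ∈ unitDisk, g z * h z = 1

open ComplexConjugate
open scoped Nat Topology

theorem isOpen_unitDisk : IsOpen unitDisk := isOpen_lt continuous_norm continuous_const

section TaylorBounds

variable {g : ℂ → ℂ} {c : ℂ} {R M : ℝ}

theorem norm_iteratedDeriv_le_of_forall_mem_ball_norm_le (n : ℕ) (hR : 0 < R)
    (hg : DifferentiableOn ℂ g (ball c R)) (hM : ∀ ξ ∈ ball c R, ‖g ξ‖ ≤ M) :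
    ‖iteratedDeriv n g c‖ ≤ n ! * M / R ^ n := by
  have hcont : Tendsto (fun r : ℝ => n ! * M / r ^ n) (𝓝[<] R) (𝓝 (n ! * M / R ^ n)) :=
    ((continuousAt_const.div (continuousAt_id.pow n) (pow_ne_zero n hR.ne')).tendsto).mono_left
      nhdsWithin_le_nhds
  refine ge_of_tendsto hcont (eventually_of_mem (Ioo_mem_nhdsLT hR) fun r ⟨hr0, hrR⟩ => ?_)
  exact Complex.norm_iteratedDeriv_le_of_forall_mem_sphere_norm_le n hr0
    (hg.diffContOnCl_ball (closedBall_subset_ball hrR))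
    fun ξ hξ => hM ξ (closedBall_subset_ball hrR (sphere_subset_closedBall hξ))

theorem norm_sub_sub_deriv_mul_le (hR : 0 < R) (hg : DifferentiableOn ℂ g (ball c R))
    (hM : ∀ ξ ∈ ball c R, ‖g ξ‖ ≤ M) {y : ℂ} (hy : ‖y‖ < R) :
    ‖g (c + y) - g c - deriv g c * y‖ ≤ M * (‖y‖ / R) ^ 2 / (1 - ‖y‖ / R) := by
  set q := ‖y‖ / R
  have hq0 : 0 ≤ q := by positivity
  have hq1 : q < 1 := (div_lt_one hR).2 hy
  have hsum := Complex.hasSum_taylorSeries_on_ball hg (z := c + y) (by simpa using hy)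
  simp only [add_sub_cancel_left, smul_eq_mul] at hsum
  have htail := (hasSum_nat_add_iff' 2).2 hsum
  simp only [Finset.sum_range_succ, Finset.sum_range_zero, iteratedDeriv_zero, iteratedDeriv_one,
    Nat.factorial_zero, Nat.factorial_one, Nat.cast_one, inv_one, pow_zero, pow_one, one_mul,
    zero_add] at htail
  have hterm : ∀ n : ℕ, ‖((n + 2)! : ℂ)⁻¹ * (y ^ (n + 2) * iteratedDeriv (n + 2) g c)‖
      ≤ M * q ^ 2 * q ^ n := by
    intro n
    have hD := norm_iteratedDeriv_le_of_forall_mem_ball_norm_le (n + 2) hR hg hM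
    rw [norm_mul, norm_mul, norm_inv, norm_pow, Complex.norm_natCast]
    calc ((n + 2)! : ℝ)⁻¹ * (‖y‖ ^ (n + 2) * ‖iteratedDeriv (n + 2) g c‖)
        ≤ ((n + 2)! : ℝ)⁻¹ * (‖y‖ ^ (n + 2) * ((n + 2)! * M / R ^ (n + 2))) := by gcongr
      _ = M * q ^ 2 * q ^ n := by
        simp only [q, div_pow]; field_simp; ring
  have hgeom : HasSum (fun n : ℕ => M * q ^ 2 * q ^ n) (M * q ^ 2 / (1 - q)) := by
    simpa [div_eq_mul_inv] using (hasSum_geometric_of_lt_one hq0 hq1).mul_left (M * q ^ 2)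
  simpa only [sub_add_eq_sub_sub, mul_comm y] using htail.norm_le_of_bounded hgeom hterm

end TaylorBounds

section DiskAutomorphism

def diskAut (a ξ : ℂ) : ℂ := (ξ + a) / (1 + conj a * ξ)

variable {a ξ w : ℂ}

@[simp]
theorem diskAut_zero (a : ℂ) : diskAut a 0 = a := by simp [diskAut]

theorem normSq_one_add_conj_mul_sub_normSq_add (a ξ : ℂ) :
    normSq (1 + conj a * ξ) - normSq (ξ + a) = (1 - normSq a) * (1 - normSq ξ) := by
  simp only [normSq_apply, add_re, add_im, mul_re, mul_im, one_re, one_im, conj_re, conj_im]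
  ring

theorem one_add_conj_mul_ne_zero (ha : ‖a‖ < 1) (hξ : ‖ξ‖ < 1) : 1 + conj a * ξ ≠ 0 := by
  intro h
  have h1 : ‖conj a * ξ‖ = 1 := by simp [eq_neg_of_add_eq_zero_right h]
  rw [norm_mul, norm_conj] at h1
  nlinarith [norm_nonneg a, norm_nonneg ξ]

theorem norm_diskAut_lt_one (ha : ‖a‖ < 1) (hξ : ‖ξ‖ < 1) : ‖diskAut a ξ‖ < 1 := by
  have hden := norm_pos_iff.2 (one_add_conj_mul_ne_zero ha hξ)
  rw [diskAut, norm_div, div_lt_one hden]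
  refine lt_of_pow_lt_pow_left₀ 2 (norm_nonneg _) ?_
  have ha' : normSq a < 1 := by rw [← Complex.sq_norm]; nlinarith [norm_nonneg a]
  have hξ' : normSq ξ < 1 := by rw [← Complex.sq_norm]; nlinarith [norm_nonneg ξ]
  rw [Complex.sq_norm, Complex.sq_norm]
  nlinarith [normSq_one_add_conj_mul_sub_normSq_add a ξ]

theorem diskAut_neg_apply (a w : ℂ) : diskAut (-a) w = (w - a) / (1 - conj a * w) := by
  simp [diskAut, sub_eq_add_neg]

theorem norm_diskAut_neg (a w : ℂ) : ‖diskAut (-a) w‖ = pd a w := by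
  rw [diskAut_neg_apply, norm_div, norm_sub_rev, pd]

theorem diskAut_diskAut_neg (ha : ‖a‖ < 1) (hw : ‖w‖ < 1) : diskAut a (diskAut (-a) w) = w := by
  have hden : 1 - conj a * w ≠ 0 := by
    simpa [sub_eq_add_neg] using one_add_conj_mul_ne_zero (a := -a) (by simpa using ha) hw
  have hζ : diskAut (-a) w * (1 - conj a * w) = w - a := by
    rw [diskAut_neg_apply, div_mul_cancel₀ _ hden]
  rw [diskAut, div_eq_iff (one_add_conj_mul_ne_zero ha (norm_diskAut_lt_one (by simpa) hw))]
  linear_combination hζ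

theorem differentiableAt_diskAut (ha : ‖a‖ < 1) (hξ : ‖ξ‖ < 1) :
    DifferentiableAt ℂ (diskAut a) ξ :=
  (differentiableAt_id.add_const a).div ((differentiableAt_id.const_mul _).const_add 1)
    (one_add_conj_mul_ne_zero ha hξ)

theorem hasDerivAt_diskAut_zero (a : ℂ) : HasDerivAt (diskAut a) ((1 - ‖a‖ ^ 2 : ℝ) : ℂ) 0 := by
  have h : HasDerivAt (fun ξ => (ξ + a) / (1 + conj a * ξ)) _ 0 :=
    ((hasDerivAt_id' 0).add_const a).div (((hasDerivAt_id' 0).const_mul (conj a)).const_add 1)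
      (by simp)
  refine h.congr_deriv ?_
  push_cast
  rw [← conj_mul']
  ring

end DiskAutomorphism

theorem norm_sub_sub_deriv_mul_diskAut_le {f : ℂ → ℂ} {z w : ℂ}
    (hf : DifferentiableOn ℂ f unitDisk) (hb : ∀ ξ ∈ unitDisk, ‖f ξ‖ ≤ 1)
    (hz : z ∈ unitDisk) (hw : w ∈ unitDisk) :
    ‖f w - f z - deriv f z * ((1 - ‖z‖ ^ 2 : ℝ) : ℂ) * diskAut (-z) w‖
      ≤ pd z w ^ 2 / (1 - pd z w) := by
  have hmaps : MapsTo (diskAut z) (ball 0 1) unitDisk := fun ξ hξ =>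
    norm_diskAut_lt_one hz (mem_ball_zero_iff.1 hξ)
  have hg : DifferentiableOn ℂ (f ∘ diskAut z) (ball 0 1) :=
    hf.comp (fun ξ hξ => (differentiableAt_diskAut hz (mem_ball_zero_iff.1 hξ)).differentiableWithinAt)
      hmaps
  have hfz : HasDerivAt f (deriv f z) (diskAut z 0) := by
    rw [diskAut_zero]
    exact (hf.differentiableAt (isOpen_unitDisk.mem_nhds hz)).hasDerivAt
  have hderiv : deriv (f ∘ diskAut z) 0 = deriv f z * ((1 - ‖z‖ ^ 2 : ℝ) : ℂ) :=
    (hfz.comp 0 (hasDerivAt_diskAut_zero z)).deriv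
  have hy : ‖diskAut (-z) w‖ < 1 := norm_diskAut_lt_one (by rwa [norm_neg]) hw
  simpa [hderiv, diskAut_diskAut_neg hz hw, norm_diskAut_neg, mul_assoc] using
    norm_sub_sub_deriv_mul_le one_pos hg (fun ξ hξ => hb _ (hmaps hξ)) hy

theorem statement8 (f : ℂ → ℂ) (hd : DifferentiableOn ℂ f unitDisk)
    (hb : ∀ z ∈ unitDisk, ‖f z‖ ≤ 1)
    (δ : ℝ) (hδ0 : 0 < δ) (hδ : δ < 1/5)
    (z : ℂ) (hz : z ∈ unitDisk)
    (hfz : ‖f z‖ ≤ δ ^ 4)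
    (hfz' : δ ≤ (1 - ‖z‖ ^ 2) * ‖deriv f z‖) :
    ∀ w ∈ unitDisk, pd z w = δ ^ 2 → δ ^ 4 ≤ ‖f w‖ := by
  intro w hw hpd
  have hrem := norm_sub_sub_deriv_mul_diskAut_le hd hb hz hw
  set L := deriv f z * ((1 - ‖z‖ ^ 2 : ℝ) : ℂ) * diskAut (-z) w
  have hL : δ ^ 3 ≤ ‖L‖ := by
    have hz1 : 0 ≤ 1 - ‖z‖ ^ 2 := by nlinarith [norm_nonneg z, show ‖z‖ < 1 from hz]
    rw [norm_mul, norm_mul, norm_diskAut_neg, hpd, norm_real, Real.norm_of_nonneg hz1]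
    nlinarith
  have htri : ‖L‖ ≤ ‖f w‖ + ‖f z‖ + ‖f w - f z - L‖ :=
    calc ‖L‖ = ‖f w - f z - (f w - f z - L)‖ := by rw [sub_sub_cancel]
      _ ≤ ‖f w - f z‖ + ‖f w - f z - L‖ := norm_sub_le _ _
      _ ≤ ‖f w‖ + ‖f z‖ + ‖f w - f z - L‖ := by gcongr; exact norm_sub_le _ _
  have hremδ : ‖f w - f z - L‖ ≤ 25 / 24 * δ ^ 4 := by
    have hδ2 : 24 / 25 ≤ 1 - δ ^ 2 := by nlinarith
    calc ‖f w - f z - L‖ ≤ (δ ^ 2) ^ 2 / (1 - δ ^ 2) := hpd ▸ hrem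
      _ ≤ (δ ^ 2) ^ 2 / (24 / 25) := by gcongr
      _ = 25 / 24 * δ ^ 4 := by ring
  have hδ4 : δ ^ 4 ≤ δ ^ 3 / 5 := by nlinarith [pow_pos hδ0 3]
  linarith [pow_pos hδ0 4]

end
end

section
/- Let Λ = {λ_n} be a sequence in the unit disk with Blaschke product B, and let H ∈ Har₊(𝔻) with inf_{z∈𝔻} H(z) ≥ log 3 be such that |B(z)| ≥ e^{−H(z)} ρ(z,Λ) for all z in the unit disk. Then for every H₁ ∈ Har₊(𝔻) with inf_{z∈𝔻} H₁(z) ≥ log 3, one has |B(z)| ≥ e^{−(2H(z) + 2H₁(z))} whenever z lies outside the union of the disks D(λ_n, e^{−H₁(λ_n)}). -/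
open Complex Metric Set Filter

noncomputable section

open InnerProductSpace Topology

/-! Off the disks, `ρ(z, λₙ) ≥ e^{-H₁(λₙ)}`. On the euclidean disk `ball z (1 - |z|)` we have
`e^{-H₁} = |e^{-F}|` with `F` holomorphic and `|e^{-F}| ≤ 1/3`, so by the Schwarz lemma
`e^{-H₁}` is Lipschitz there with constant `≈ 1/(1 - |z|)`. Hence either `λₙ` is
pseudohyperbolically far from `z`, or `e^{-H₁(z)} ≤ e^{-H₁(λₙ)} + O(ρ(z, λₙ)) ≤ 3 ρ(z, λₙ)`;
either way `ρ(z, λₙ) ≥ e^{-2 H₁(z)}`, and the hypothesis on `B` concludes. -/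

theorem HarmonicOnSet.harmonicOnNhd {u : ℂ → ℝ} {Ω : Set ℂ} (hu : HarmonicOnSet u Ω) :
    HarmonicOnNhd u Ω := by
  intro x hx
  obtain ⟨r, hr, -, F, hF, hFu⟩ := hu x hx
  have hball : ball x r ∈ 𝓝 x := ball_mem_nhds x hr
  refine (harmonicAt_congr_nhds ?_).1 ((hF.analyticAt hball).harmonicAt_re)
  filter_upwards [hball] with w hw using (hFu w hw).symm

theorem InnerProductSpace.HarmonicOnNhd.abs_exp_neg_sub_exp_neg_le {u : ℂ → ℝ} {c w : ℂ}
    {R m : ℝ} (hu : HarmonicOnNhd u (ball c R)) (hm : ∀ v ∈ ball c R, m ≤ u v)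
    (hw : w ∈ ball c R) :
    |Real.exp (-u w) - Real.exp (-u c)| ≤ 2 * Real.exp (-m) / R * ‖w - c‖ := by
  obtain ⟨F, hF, hFu⟩ := hu.exists_analyticOnNhd_ball_re_eq
  have hc : c ∈ ball c R := mem_ball_self (pos_of_mem_ball hw)
  have hnorm : ∀ v ∈ ball c R, ‖cexp (-F v)‖ = Real.exp (-u v) := fun v hv => by
    rw [Complex.norm_exp, neg_re, show (F v).re = u v from hFu hv]
  have hsmall : ∀ v ∈ ball c R, ‖cexp (-F v)‖ ≤ Real.exp (-m) := fun v hv => by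
    rw [hnorm v hv]
    exact Real.exp_le_exp.2 (neg_le_neg (hm v hv))
  have hmaps : MapsTo (fun v => cexp (-F v)) (ball c R)
      (closedBall (cexp (-F c)) (2 * Real.exp (-m))) := fun v hv => by
    rw [mem_closedBall, dist_eq_norm]
    linarith [norm_sub_le (cexp (-F v)) (cexp (-F c)), hsmall v hv, hsmall c hc]
  have hSchwarz := Complex.dist_le_div_mul_dist_of_mapsTo_ball
    (hF.differentiableOn.neg.cexp) hmaps hw
  rw [← hnorm w hw, ← hnorm c hc, ← dist_eq_norm]
  exact (abs_norm_sub_norm_le _ _).trans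
    (by simpa only [dist_eq_norm, Pi.neg_apply] using hSchwarz)

lemma pd_comm (z w : ℂ) : pd z w = pd w z := by
  unfold pd
  rw [norm_sub_rev, ← Complex.norm_conj (1 - (starRingEnd ℂ) z * w)]
  simp only [map_sub, map_mul, map_one, Complex.conj_conj, mul_comm]

lemma norm_sub_mul_one_sub_pd_le {z w : ℂ} (hz : ‖z‖ < 1) (hw : ‖w‖ < 1) :
    ‖w - z‖ * (1 - pd z w) ≤ pd z w * (1 - ‖z‖ ^ 2) := by
  set den := ‖1 - (starRingEnd ℂ) z * w‖
  have hden : 0 < den := by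
    refine norm_pos_iff.2 (sub_ne_zero.2 fun h => ?_)
    have : ‖(starRingEnd ℂ) z * w‖ < 1 := by
      rw [norm_mul, Complex.norm_conj]
      nlinarith [norm_nonneg z, norm_nonneg w]
    rw [← h, norm_one] at this
    exact lt_irrefl _ this
  have hnum : ‖w - z‖ = pd z w * den := by
    rw [pd, norm_sub_rev, div_mul_cancel₀ _ hden.ne']
  have hconj : (1 : ℂ) - (starRingEnd ℂ) z * z = ((1 - ‖z‖ ^ 2 : ℝ) : ℂ) := by
    rw [mul_comm, Complex.mul_conj, Complex.normSq_eq_norm_sq]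
    push_cast
    ring
  -- `1 - z̄ w = (1 - |z|²) + z̄ (z - w)`
  have hden_le : den ≤ (1 - ‖z‖ ^ 2) + ‖z‖ * ‖w - z‖ := by
    calc den = ‖(1 - (starRingEnd ℂ) z * z) + (starRingEnd ℂ) z * (z - w)‖ := by
          simp only [den]; congr 1; ring
      _ ≤ ‖1 - (starRingEnd ℂ) z * z‖ + ‖(starRingEnd ℂ) z * (z - w)‖ := norm_add_le _ _
      _ = (1 - ‖z‖ ^ 2) + ‖z‖ * ‖w - z‖ := by
        rw [hconj, norm_mul, Complex.norm_conj, Complex.norm_real, Real.norm_eq_abs,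
          abs_of_nonneg (by nlinarith [norm_nonneg z]), norm_sub_rev]
  have hpd : 0 ≤ pd z w := by unfold pd; positivity
  rw [hnum] at hden_le ⊢
  nlinarith [mul_le_mul_of_nonneg_left hden_le hpd, norm_nonneg z,
    mul_nonneg (mul_nonneg hpd hden.le) (sub_nonneg.2 hz.le)]

lemma unitDisk_eq_ball : unitDisk = ball 0 1 := by
  ext z
  simp [unitDisk]

lemma ball_one_sub_norm_subset_unitDisk (z : ℂ) : ball z (1 - ‖z‖) ⊆ unitDisk := by
  rw [unitDisk_eq_ball]
  exact ball_subset_ball' (by rw [dist_zero_right]; linarith)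

lemma exp_neg_two_mul_le_pd {u : ℂ → ℝ} (hu : HarmonicOnSet u unitDisk)
    (hu3 : ∀ v ∈ unitDisk, Real.log 3 ≤ u v) {z w : ℂ} (hz : z ∈ unitDisk)
    (hw : w ∈ unitDisk) (hfar : Real.exp (-u w) ≤ pd z w) :
    Real.exp (-(2 * u z)) ≤ pd z w := by
  have hthird : Real.exp (-Real.log 3) = 1 / 3 := by
    rw [Real.exp_neg, Real.exp_log three_pos, one_div]
  have ha : Real.exp (-u z) ≤ 1 / 3 := hthird ▸ Real.exp_le_exp.2 (neg_le_neg (hu3 z hz))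
  have hsq : Real.exp (-(2 * u z)) = Real.exp (-u z) ^ 2 := by
    rw [← Real.exp_nat_mul]; ring_nf
  have ha0 := Real.exp_pos (-u z)
  rw [hsq]
  rcases le_or_gt (1 / 9) (pd z w) with hρ | hρ
  · nlinarith
  have hz1 : ‖z‖ < 1 := hz
  have hρ0 : 0 ≤ pd z w := hfar.trans' (Real.exp_pos _).le
  have hgeom := norm_sub_mul_one_sub_pd_le hz1 hw
  have hclose : ‖w - z‖ ≤ 9 / 4 * pd z w * (1 - ‖z‖) := by
    nlinarith [norm_nonneg z, norm_nonneg (w - z), mul_nonneg hρ0 (sub_nonneg.2 hz1.le)]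
  have hwball : w ∈ ball z (1 - ‖z‖) := by
    rw [mem_ball, dist_eq_norm]
    nlinarith [norm_nonneg z]
  have hsub := ball_one_sub_norm_subset_unitDisk z
  have hharnack := (hu.harmonicOnNhd.mono hsub).abs_exp_neg_sub_exp_neg_le
    (fun v hv => hu3 v (hsub hv)) hwball
  rw [hthird] at hharnack
  have hR : 0 < 1 - ‖z‖ := by linarith
  have hlip : 2 * (1 / 3) / (1 - ‖z‖) * ‖w - z‖ ≤ 3 / 2 * pd z w := by
    rw [div_mul_eq_mul_div, div_le_iff₀ hR]
    nlinarith
  nlinarith [abs_le.1 (hharnack.trans hlip)]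

theorem statement12_general (Λ : ℕ → ℂ) (hΛ : BlaschkeSeq Λ) (H : ℂ → ℝ)
    (hH3 : ∀ z ∈ unitDisk, Real.log 3 ≤ H z)
    (hB : ∀ z ∈ unitDisk,
      Real.exp (-H z) * (⨅ n, pd z (Λ n)) ≤ ‖blaschkeProduct Λ z‖) :
    ∀ H₁ : ℂ → ℝ, PosHarmonic H₁ → (∀ z ∈ unitDisk, Real.log 3 ≤ H₁ z) →
      ∀ z ∈ unitDisk, z ∉ ⋃ n, pBall (Λ n) (Real.exp (-H₁ (Λ n))) →
        Real.exp (-(2 * H z + 2 * H₁ z)) ≤ ‖blaschkeProduct Λ z‖ := by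
  intro H₁ hH₁ hH₁3 z hz hout
  have hfar : ∀ n, Real.exp (-(2 * H₁ z)) ≤ pd z (Λ n) := fun n => by
    refine exp_neg_two_mul_le_pd hH₁.1 hH₁3 hz (hΛ.1 n) ?_
    rw [pd_comm]
    exact not_lt.1 fun hlt => hout (mem_iUnion.2 ⟨n, hz, hlt⟩)
  have hexpH : Real.exp (-H z) ≤ 1 :=
    Real.exp_le_one_iff.2 (by linarith [hH3 z hz, Real.log_nonneg (by norm_num : (1 : ℝ) ≤ 3)])
  calc Real.exp (-(2 * H z + 2 * H₁ z))
      = Real.exp (-H z) * (Real.exp (-H z) * Real.exp (-(2 * H₁ z))) := by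
        rw [← Real.exp_add, ← Real.exp_add]; ring_nf
    _ ≤ Real.exp (-H z) * Real.exp (-(2 * H₁ z)) :=
        mul_le_mul_of_nonneg_left (mul_le_of_le_one_left (Real.exp_pos _).le hexpH)
          (Real.exp_pos _).le
    _ ≤ Real.exp (-H z) * ⨅ n, pd z (Λ n) :=
        mul_le_mul_of_nonneg_left (le_ciInf hfar) (Real.exp_pos _).le
    _ ≤ ‖blaschkeProduct Λ z‖ := hB z hz

theorem statement12 (Λ : ℕ → ℂ) (hΛ : BlaschkeSeq Λ) (H : ℂ → ℝ)
    (hH : PosHarmonic H) (hH3 : ∀ z ∈ unitDisk, Real.log 3 ≤ H z)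
    (hB : ∀ z ∈ unitDisk,
      Real.exp (-H z) * (⨅ n, pd z (Λ n)) ≤ ‖blaschkeProduct Λ z‖) :
    ∀ H₁ : ℂ → ℝ, PosHarmonic H₁ → (∀ z ∈ unitDisk, Real.log 3 ≤ H₁ z) →
      ∀ z ∈ unitDisk, z ∉ ⋃ n, pBall (Λ n) (Real.exp (-H₁ (Λ n))) →
        Real.exp (-(2 * H z + 2 * H₁ z)) ≤ ‖blaschkeProduct Λ z‖ :=
  statement12_general Λ hΛ H hH3 hB

end
end
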